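/- With Q having the SBP boundary structure Q = -e_L p_Lᵀ + e_R p_Rᵀ, the energy rate for the penalized system equals E'(t) = (σ_L + 1)(Vᵀ p_L)(e_Lᵀ P) + (σ_R − 1)(Vᵀ p_R)(e_Rᵀ P). -/

import Mathlib

/-!
Since `A_P` and `A_V` are symmetric, `E' = Pᵀ A_P P' + Vᵀ A_V V'`. Substituting the equations of
motion, the interior terms add up to `-(Pᵀ (A_P D_V) V + Vᵀ (A_V D_P) P) = -Pᵀ Q V`, and the
summation-by-parts structure of `Q` turns this into the boundary terms
`(e_Lᵀ P)(p_Lᵀ V) - (e_Rᵀ P)(p_Rᵀ V)`, which combine with the penalty terms.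
-/

open Matrix

section Calculus

variable {𝕜 ι : Type*} [NontriviallyNormedField 𝕜] [Fintype ι] {x y : 𝕜 → ι → 𝕜}
  {x' y' : ι → 𝕜} {t : 𝕜}

theorem HasDerivAt.dotProduct (hx : HasDerivAt x x' t) (hy : HasDerivAt y y' t) :
    HasDerivAt (fun s => x s ⬝ᵥ y s) (x' ⬝ᵥ y t + x t ⬝ᵥ y') t := by
  unfold _root_.dotProduct
  rw [← Finset.sum_add_distrib]
  exact HasDerivAt.fun_sum fun i _ => (hasDerivAt_pi.mp hx i).mul (hasDerivAt_pi.mp hy i)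

theorem HasDerivAt.mulVec {κ : Type*} (A : Matrix κ ι 𝕜) (hx : HasDerivAt x x' t) :
    HasDerivAt (fun s => A *ᵥ x s) (A *ᵥ x') t :=
  hasDerivAt_pi.mpr fun i =>
    ((hasDerivAt_const t (A i)).dotProduct hx).congr_deriv (by rw [zero_dotProduct, zero_add]; rfl)

theorem HasDerivAt.dotProduct_mulVec_self {A : Matrix ι ι 𝕜} (hA : A.IsSymm)
    (hx : HasDerivAt x x' t) :
    HasDerivAt (fun s => x s ⬝ᵥ A *ᵥ x s) (2 * (x t ⬝ᵥ A *ᵥ x')) t := by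
  refine (hx.dotProduct (hx.mulVec A)).congr_deriv ?_
  rw [← hA.eq, dotProduct_transpose_mulVec, hA.eq, two_mul]

end Calculus

theorem dotProduct_mulVec_add_dotProduct_mulVec_eq_of_add_transpose_eq {m n R : Type*}
    [Fintype m] [Fintype n] [CommRing R] {B : Matrix m n R} {C : Matrix n m R}
    {eL eR : m → R} {pL pR : n → R} (hQ : B + Cᵀ = -vecMulVec eL pL + vecMulVec eR pR)
    (x : m → R) (y : n → R) :
    x ⬝ᵥ B *ᵥ y + y ⬝ᵥ C *ᵥ x = -(eL ⬝ᵥ x) * (pL ⬝ᵥ y) + (eR ⬝ᵥ x) * (pR ⬝ᵥ y) := by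
  rw [← dotProduct_transpose_mulVec C, ← dotProduct_add, ← add_mulVec, hQ, add_mulVec,
    neg_mulVec, vecMulVec_mulVec, vecMulVec_mulVec]
  simp only [dotProduct_add, dotProduct_neg, dotProduct_smul, MulOpposite.smul_eq_mul_unop,
    MulOpposite.unop_op, dotProduct_comm x eL, dotProduct_comm x eR]
  ring

theorem stmt3_general {NP NV : ℕ}
    (AP : Matrix (Fin (NP + 1)) (Fin (NP + 1)) ℝ) (AV : Matrix (Fin NV) (Fin NV) ℝ)
    (DV : Matrix (Fin (NP + 1)) (Fin NV) ℝ) (DP : Matrix (Fin NV) (Fin (NP + 1)) ℝ)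
    (hAP : AP.PosDef) (hAV : AV.PosDef)
    (pL pR : Fin NV → ℝ)
    (eL eR : Fin (NP + 1) → ℝ)
    (hQ : AP * DV + (AV * DP)ᵀ = -vecMulVec eL pL + vecMulVec eR pR)
    (σL σR : ℝ)
    (P : ℝ → Fin (NP + 1) → ℝ) (V : ℝ → Fin NV → ℝ)
    (P' : ℝ → Fin (NP + 1) → ℝ) (V' : ℝ → Fin NV → ℝ)
    (hP : ∀ t, HasDerivAt P (P' t) t) (hV : ∀ t, HasDerivAt V (V' t) t)
    (hPode : ∀ t, AP.mulVec (P' t) = -((AP * DV).mulVec (V t)))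
    (hVode : ∀ t, AV.mulVec (V' t) =
      -((AV * DP).mulVec (P t)) + (σL * (eL ⬝ᵥ P t)) • pL + (σR * (eR ⬝ᵥ P t)) • pR)
    (t : ℝ) :
    HasDerivAt
      (fun s => (1/2) * (P s ⬝ᵥ AP.mulVec (P s)) + (1/2) * (V s ⬝ᵥ AV.mulVec (V s)))
      ((σL + 1) * (V t ⬝ᵥ pL) * (eL ⬝ᵥ P t) + (σR - 1) * (V t ⬝ᵥ pR) * (eR ⬝ᵥ P t)) t := by
  have hAPsymm : AP.IsSymm := isHermitian_iff_isSymm.mp hAP.isHermitian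
  have hAVsymm : AV.IsSymm := isHermitian_iff_isSymm.mp hAV.isHermitian
  have hE := (((hP t).dotProduct_mulVec_self hAPsymm).const_mul (1 / 2 : ℝ)).add
    (((hV t).dotProduct_mulVec_self hAVsymm).const_mul (1 / 2 : ℝ))
  refine hE.congr_deriv ?_
  have hSBP := dotProduct_mulVec_add_dotProduct_mulVec_eq_of_add_transpose_eq hQ (P t) (V t)
  rw [hPode t, hVode t]
  simp only [dotProduct_neg, dotProduct_add, dotProduct_smul, smul_eq_mul]
  rw [dotProduct_comm (V t) pL, dotProduct_comm (V t) pR]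
  linear_combination -hSBP

/-- Energy rate for the SAT-penalized 1D boundary system with general penalties. -/
theorem stmt3 {NP NV : ℕ}
    (AP : Matrix (Fin (NP + 1)) (Fin (NP + 1)) ℝ) (AV : Matrix (Fin NV) (Fin NV) ℝ)
    (DV : Matrix (Fin (NP + 1)) (Fin NV) ℝ) (DP : Matrix (Fin NV) (Fin (NP + 1)) ℝ)
    (hAP : AP.PosDef) (hAV : AV.PosDef)
    (pL pR : Fin NV → ℝ)
    (eL eR : Fin (NP + 1) → ℝ)
    (heL : eL = Pi.single 0 1) (heR : eR = Pi.single (Fin.last NP) 1)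
    (hQ : AP * DV + (AV * DP)ᵀ = -vecMulVec eL pL + vecMulVec eR pR)
    (σL σR : ℝ)
    (P : ℝ → Fin (NP + 1) → ℝ) (V : ℝ → Fin NV → ℝ)
    (P' : ℝ → Fin (NP + 1) → ℝ) (V' : ℝ → Fin NV → ℝ)
    (hP : ∀ t, HasDerivAt P (P' t) t) (hV : ∀ t, HasDerivAt V (V' t) t)
    (hPode : ∀ t, AP.mulVec (P' t) = -((AP * DV).mulVec (V t)))
    (hVode : ∀ t, AV.mulVec (V' t) =
      -((AV * DP).mulVec (P t)) + (σL * (eL ⬝ᵥ P t)) • pL + (σR * (eR ⬝ᵥ P t)) • pR)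
    (t : ℝ) :
    HasDerivAt
      (fun s => (1/2) * (P s ⬝ᵥ AP.mulVec (P s)) + (1/2) * (V s ⬝ᵥ AV.mulVec (V s)))
      ((σL + 1) * (V t ⬝ᵥ pL) * (eL ⬝ᵥ P t) + (σR - 1) * (V t ⬝ᵥ pR) * (eR ⬝ᵥ P t)) t :=
  stmt3_general AP AV DV DP hAP hAV pL pR eL eR hQ σL σR P V P' V' hP hV hPode hVode t
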